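/- Let X be a complex Banach space, A a positive operator on X, m ≥ 1 an integer, and α ∈ (0,1). Then the Bochner integral ∫₀^∞ s^{m-α} (s+A)^{-(m+1)} ds converges in L(X) and (sin(πα)/π) · m!/((1-α)(2-α)···(m-α)) · ∫₀^∞ s^{m-α} (s+A)^{-(m+1)} ds = A^{-α}, where A^{-α} = (sin(πα)/π) ∫₀^∞ s^{-α}(s+A)^{-1} ds. -/

import Mathlib

open MeasureTheory Real Set

noncomputable section

/-- `R` is a two-sided bounded inverse of `lam + A : D(A) → X`;
in particular `lam + A` is bijective from `D(A)` onto `X` with bounded inverse `R`. -/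
def ResolventAt {X : Type*} [NormedAddCommGroup X] [NormedSpace ℂ X]
    (A : X →ₗ.[ℂ] X) (lam : ℂ) (R : X →L[ℂ] X) : Prop :=
  (∀ x : A.domain, R (lam • (x : X) + A x) = x) ∧
  (∀ y : X, ∃ h : R y ∈ A.domain, lam • R y + A ⟨R y, h⟩ = y)

/-- `A` is a positive operator with constant `M ≥ 1` and resolvent family `R`. -/
structure IsPositive {X : Type*} [NormedAddCommGroup X] [NormedSpace ℂ X]
    (A : X →ₗ.[ℂ] X) (M : ℝ) (R : ℝ → X →L[ℂ] X) : Prop where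
  dense_domain : Dense (A.domain : Set X)
  closed_graph : IsClosed (A.graph : Set (X × X))
  one_le : 1 ≤ M
  resolvent : ∀ s : ℝ, 0 ≤ s → ResolventAt A (s : ℂ) (R s)
  bound : ∀ s : ℝ, 0 ≤ s → (1 + s) * ‖R s‖ ≤ M

/-- The Balakrishnan fractional power `A ^ (-α)`, expressed through the
resolvent family `R` of `A`:  `A⁻ᵅ = (sin (π α) / π) ∫₀^∞ s⁻ᵅ (s+A)⁻¹ ds`. -/
def negPow {X : Type*} [NormedAddCommGroup X] [NormedSpace ℂ X]
    (R : ℝ → X →L[ℂ] X) (α : ℝ) : X →L[ℂ] X :=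
  (Real.sin (π * α) / π) • ∫ s in Ioi (0 : ℝ), s ^ (-α) • R s

/-! The resolvent identity `R s - R t = (t - s) R s R t` makes `s ↦ R s` differentiable with
`(R ^ n)' = -n R ^ (n + 1)`. Integrating `d/ds (s ^ (β + 1) R s ^ n)` over `(0, ∞)`, where the
boundary terms vanish because `‖R s‖ ≤ M / (1 + s)`, gives
`(β + 1) ∫ s ^ β R ^ n = n ∫ s ^ (β + 1) R ^ (n + 1)`. Starting from the Balakrishnan integral
`∫ s ^ (-α) R s` and applying this `m` times produces the factor `m! / ∏ (k - α)`. -/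

open Filter Topology

section Resolvent

variable {X : Type*} [NormedAddCommGroup X] [NormedSpace ℂ X] {A : X →ₗ.[ℂ] X}

theorem ResolventAt.sub_eq_smul_mul {lam mu : ℂ} {R S : X →L[ℂ] X}
    (hR : ResolventAt A lam R) (hS : ResolventAt A mu S) : R - S = (mu - lam) • (R * S) := by
  ext y
  obtain ⟨hdom, hSy⟩ := hS.2 y
  have hR_Sy : R (lam • S y + A ⟨S y, hdom⟩) = S y := hR.1 ⟨S y, hdom⟩
  rw [eq_sub_of_add_eq' hSy] at hR_Sy
  simp only [sub_apply, smul_apply, mul_apply_eq_comp]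
  conv_lhs => rw [← hR_Sy]
  simp only [map_add, map_sub, map_smul]
  module

end Resolvent

namespace IsPositive

variable {X : Type*} [NormedAddCommGroup X] [NormedSpace ℂ X]
  {M : ℝ} {A : X →ₗ.[ℂ] X} {R : ℝ → X →L[ℂ] X}

theorem pos (hA : IsPositive A M R) : 0 < M := one_pos.trans_le hA.one_le

theorem norm_le_div (hA : IsPositive A M R) {s : ℝ} (hs : 0 ≤ s) : ‖R s‖ ≤ M / (1 + s) := by
  rw [le_div_iff₀ (by linarith)]
  linarith [hA.bound s hs]

theorem norm_le (hA : IsPositive A M R) {s : ℝ} (hs : 0 ≤ s) : ‖R s‖ ≤ M :=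
  (hA.norm_le_div hs).trans (div_le_self hA.pos.le (by linarith))

theorem sub_eq_smul_mul (hA : IsPositive A M R) {s t : ℝ} (hs : 0 ≤ s) (ht : 0 ≤ t) :
    R s - R t = (t - s) • (R s * R t) := by
  rw [(hA.resolvent s hs).sub_eq_smul_mul (hA.resolvent t ht), ← Complex.ofReal_sub,
    Complex.coe_smul]

theorem norm_sub_le (hA : IsPositive A M R) {s t : ℝ} (hs : 0 ≤ s) (ht : 0 ≤ t) :
    ‖R t - R s‖ ≤ M ^ 2 * |t - s| := by
  rw [hA.sub_eq_smul_mul ht hs, norm_smul, Real.norm_eq_abs, abs_sub_comm, mul_comm, sq]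
  gcongr
  exact (norm_mul_le _ _).trans
    (mul_le_mul (hA.norm_le ht) (hA.norm_le hs) (norm_nonneg _) hA.pos.le)

theorem continuousOn (hA : IsPositive A M R) : ContinuousOn R (Ici 0) := by
  refine LipschitzOnWith.continuousOn (K := (M ^ 2).toNNReal) ?_
  refine LipschitzOnWith.of_dist_le_mul fun t ht s hs => ?_
  rw [dist_eq_norm, dist_eq_norm, Real.norm_eq_abs, Real.coe_toNNReal _ (sq_nonneg M)]
  exact hA.norm_sub_le hs ht

theorem hasDerivAt (hA : IsPositive A M R) {s : ℝ} (hs : 0 < s) :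
    HasDerivAt R (-(R s * R s)) s := by
  have hcont : ContinuousAt R s := hA.continuousOn.continuousAt (Ici_mem_nhds hs)
  have hslope : (fun t => -(R t * R s)) =ᶠ[𝓝[≠] s] slope R s := by
    filter_upwards [self_mem_nhdsWithin, nhdsWithin_le_nhds (Ici_mem_nhds hs)] with t hts ht
    rw [slope_def_module, hA.sub_eq_smul_mul ht hs.le, smul_smul, ← neg_sub t s, mul_neg,
      inv_mul_cancel₀ (sub_ne_zero.2 hts), neg_smul, one_smul]
  rw [hasDerivAt_iff_tendsto_slope]
  exact ((hcont.mul continuousAt_const).neg.tendsto.mono_left nhdsWithin_le_nhds).congr' hslope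

theorem hasDerivAt_pow (hA : IsPositive A M R) (n : ℕ) {s : ℝ} (hs : 0 < s) :
    HasDerivAt (fun t => R t ^ n) (-((n : ℝ) • R s ^ (n + 1))) s := by
  induction n with
  | zero => simpa using hasDerivAt_const s (1 : X →L[ℂ] X)
  | succ n ih =>
    have h := ih.fun_mul (hA.hasDerivAt hs)
    simp only [← pow_succ] at h
    refine h.congr_deriv ?_
    simp only [neg_mul, mul_neg, smul_mul_assoc, ← mul_assoc, ← pow_succ]
    push_cast
    module

theorem norm_rpow_smul_pow_le (hA : IsPositive A M R) {n : ℕ} (hn : n ≠ 0) (β : ℝ) {s : ℝ}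
    (hs : 0 ≤ s) : ‖s ^ β • R s ^ n‖ ≤ M ^ n * s ^ β := by
  rw [norm_smul, Real.norm_eq_abs, abs_of_nonneg (rpow_nonneg hs β), mul_comm]
  gcongr
  exact (norm_pow_le' _ (Nat.pos_of_ne_zero hn)).trans
    (pow_le_pow_left₀ (norm_nonneg _) (hA.norm_le hs) n)

theorem norm_rpow_smul_pow_le_rpow_sub (hA : IsPositive A M R) {n : ℕ} (hn : n ≠ 0) (β : ℝ)
    {s : ℝ} (hs : 0 < s) : ‖s ^ β • R s ^ n‖ ≤ M ^ n * s ^ (β - n) := by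
  have hR : ‖R s‖ ≤ M / s :=
    (hA.norm_le_div hs.le).trans (div_le_div_of_nonneg_left hA.pos.le hs (by linarith))
  calc ‖s ^ β • R s ^ n‖ ≤ s ^ β * (M / s) ^ n := by
        rw [norm_smul, Real.norm_eq_abs, abs_of_nonneg (rpow_nonneg hs.le β)]
        gcongr
        exact (norm_pow_le' _ (Nat.pos_of_ne_zero hn)).trans
          (pow_le_pow_left₀ (norm_nonneg _) hR n)
    _ = M ^ n * s ^ (β - n) := by rw [div_pow, rpow_sub hs, rpow_natCast]; ring

theorem integrableOn_rpow_smul_pow (hA : IsPositive A M R) {β : ℝ} {n : ℕ}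
    (hβ₀ : -1 < β) (hβn : β < n - 1) :
    IntegrableOn (fun s : ℝ => s ^ β • R s ^ n) (Ioi 0) := by
  have hn : n ≠ 0 := by rintro rfl; norm_num at hβn; linarith
  have hmeas :
      AEStronglyMeasurable (fun s : ℝ => s ^ β • R s ^ n) (volume.restrict (Ioi 0)) := by
    refine ContinuousOn.aestronglyMeasurable_of_isSeparable ?_ measurableSet_Ioi
      (.of_separableSpace _)
    exact fun s hs => ((continuousAt_rpow_const s β (.inl (ne_of_gt hs))).smul
      ((hA.hasDerivAt hs).continuousAt.pow n)).continuousWithinAt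
  rw [← Ioc_union_Ioi_eq_Ioi zero_le_one]
  refine .union
    (Integrable.mono' (g := fun s => M ^ n * s ^ β) ?_ (hmeas.mono_set Ioc_subset_Ioi_self) ?_)
    (Integrable.mono' (g := fun s => M ^ n * s ^ (β - n)) ?_
      (hmeas.mono_set (Ioi_subset_Ioi zero_le_one)) ?_)
  · exact (intervalIntegral.intervalIntegrable_rpow' hβ₀).1.const_mul _
  · filter_upwards [ae_restrict_mem measurableSet_Ioc] with s hs
    exact hA.norm_rpow_smul_pow_le hn β hs.1.le
  · exact (integrableOn_Ioi_rpow_of_lt (by linarith) zero_lt_one).const_mul _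
  · filter_upwards [ae_restrict_mem measurableSet_Ioi] with s hs
    exact hA.norm_rpow_smul_pow_le_rpow_sub hn β (zero_lt_one.trans hs)

theorem tendsto_rpow_smul_pow_nhdsWithin_zero (hA : IsPositive A M R) {n : ℕ} (hn : n ≠ 0)
    {β : ℝ} (hβ : 0 < β) : Tendsto (fun s : ℝ => s ^ β • R s ^ n) (𝓝[Ici 0] 0) (𝓝 0) := by
  refine squeeze_zero_norm' ?_ (?_ : Tendsto (fun s : ℝ => M ^ n * s ^ β) _ _)
  · filter_upwards [self_mem_nhdsWithin] with s hs using hA.norm_rpow_smul_pow_le hn β hs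
  · simpa [zero_rpow hβ.ne'] using
      ((continuousAt_rpow_const 0 β (.inr hβ.le)).tendsto.const_mul (M ^ n)).mono_left
        nhdsWithin_le_nhds

theorem tendsto_rpow_smul_pow_atTop (hA : IsPositive A M R) {n : ℕ} (hn : n ≠ 0) {β : ℝ}
    (hβ : β < n) : Tendsto (fun s : ℝ => s ^ β • R s ^ n) atTop (𝓝 0) := by
  refine squeeze_zero_norm' ?_ (?_ : Tendsto (fun s : ℝ => M ^ n * s ^ (β - n)) _ _)
  · filter_upwards [eventually_gt_atTop 0] with s hs
      using hA.norm_rpow_smul_pow_le_rpow_sub hn β hs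
  · simpa using (tendsto_rpow_neg_atTop (sub_pos.2 hβ)).const_mul (M ^ n)

variable [CompleteSpace X]

theorem integral_rpow_smul_pow_eq (hA : IsPositive A M R) {β : ℝ} {n : ℕ}
    (hβ₀ : -1 < β) (hβn : β < n - 1) :
    (β + 1) • ∫ s in Ioi (0 : ℝ), s ^ β • R s ^ n =
      (n : ℝ) • ∫ s in Ioi (0 : ℝ), s ^ (β + 1) • R s ^ (n + 1) := by
  have hn : n ≠ 0 := by rintro rfl; norm_num at hβn; linarith
  set F : ℝ → X →L[ℂ] X := fun s => s ^ (β + 1) • R s ^ n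
  have hF₀ : F 0 = 0 := by simp [F, zero_rpow (by linarith : β + 1 ≠ 0)]
  have hint := hA.integrableOn_rpow_smul_pow hβ₀ hβn
  have hint' := hA.integrableOn_rpow_smul_pow (β := β + 1) (n := n + 1) (by linarith)
    (by push_cast; linarith)
  have hderiv : ∀ s ∈ Ioi (0 : ℝ), HasDerivAt F
      ((β + 1) • (s ^ β • R s ^ n) - (n : ℝ) • (s ^ (β + 1) • R s ^ (n + 1))) s := by
    intro s hs
    refine ((hasDerivAt_rpow_const (p := β + 1) (.inl (ne_of_gt hs))).smul
      (hA.hasDerivAt_pow n hs)).congr_deriv ?_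
    rw [add_sub_cancel_right, smul_neg, smul_comm (s ^ (β + 1)), mul_smul]
    abel
  have hcont : ContinuousWithinAt F (Ici 0) 0 := by
    rw [ContinuousWithinAt, hF₀]
    exact hA.tendsto_rpow_smul_pow_nhdsWithin_zero hn (by linarith)
  have hint₁ : IntegrableOn (fun s => (β + 1) • (s ^ β • R s ^ n)) (Ioi 0) := hint.fun_smul _
  have hint₂ : IntegrableOn (fun s => (n : ℝ) • (s ^ (β + 1) • R s ^ (n + 1))) (Ioi 0) :=
    hint'.fun_smul _
  have hFTC := integral_Ioi_of_hasDerivAt_of_tendsto hcont hderiv (hint₁.sub hint₂)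
    (hA.tendsto_rpow_smul_pow_atTop hn (by linarith))
  rw [integral_sub hint₁ hint₂, integral_smul, integral_smul, hF₀, sub_zero] at hFTC
  exact sub_eq_zero.1 hFTC

theorem prod_smul_integral_eq (hA : IsPositive A M R) {α : ℝ} (hα : α ∈ Ioo (0 : ℝ) 1)
    (n : ℕ) :
    (∏ k ∈ Finset.Icc 1 n, ((k : ℝ) - α)) • ∫ s in Ioi (0 : ℝ), s ^ (-α) • R s =
      (n.factorial : ℝ) • ∫ s in Ioi (0 : ℝ), s ^ ((n : ℝ) - α) • R s ^ (n + 1) := by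
  induction n with
  | zero => simp
  | succ n ih =>
    have hstep := hA.integral_rpow_smul_pow_eq (β := n - α) (n := n + 1) (by linarith [hα.2])
      (by push_cast; linarith [hα.1])
    rw [Finset.prod_Icc_succ_top (by omega), mul_comm, mul_smul, ih, smul_smul, mul_comm,
      mul_smul]
    have hcast : ((n + 1 : ℕ) : ℝ) - α = n - α + 1 := by push_cast; ring
    rw [hcast, hstep, smul_smul, Nat.factorial_succ, Nat.cast_mul, mul_comm]

end IsPositive

theorem stmt6_general {X : Type*} [NormedAddCommGroup X] [NormedSpace ℂ X] [CompleteSpace X]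
    (M : ℝ) (A : X →ₗ.[ℂ] X) (R : ℝ → X →L[ℂ] X) (hA : IsPositive A M R)
    (m : ℕ) (α : ℝ) (hα : α ∈ Ioo (0 : ℝ) 1) :
    IntegrableOn (fun s : ℝ => s ^ ((m : ℝ) - α) • (R s ^ (m + 1))) (Ioi 0) ∧
    (Real.sin (π * α) / π * ((m.factorial : ℝ) / ∏ k ∈ Finset.Icc 1 m, ((k : ℝ) - α))) •
        ∫ s in Ioi (0 : ℝ), s ^ ((m : ℝ) - α) • (R s ^ (m + 1)) = negPow R α := by
  refine ⟨hA.integrableOn_rpow_smul_pow (by linarith [hα.2]) (by push_cast; linarith [hα.1]), ?_⟩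
  have hprod : ∏ k ∈ Finset.Icc 1 m, ((k : ℝ) - α) ≠ 0 := by
    refine Finset.prod_ne_zero_iff.2 fun k hk => sub_ne_zero.2 (ne_of_gt ?_)
    exact hα.2.trans_le (by exact_mod_cast (Finset.mem_Icc.1 hk).1)
  rw [negPow, mul_smul, div_eq_inv_mul (m.factorial : ℝ), mul_smul,
    ← hA.prod_smul_integral_eq hα m, inv_smul_smul₀ hprod]

theorem stmt6 {X : Type*} [NormedAddCommGroup X] [NormedSpace ℂ X] [CompleteSpace X]
    (M : ℝ) (A : X →ₗ.[ℂ] X) (R : ℝ → X →L[ℂ] X) (hA : IsPositive A M R)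
    (m : ℕ) (hm : 1 ≤ m) (α : ℝ) (hα : α ∈ Ioo (0 : ℝ) 1) :
    IntegrableOn (fun s : ℝ => s ^ ((m : ℝ) - α) • (R s ^ (m + 1))) (Ioi 0) ∧
    (Real.sin (π * α) / π * ((m.factorial : ℝ) / ∏ k ∈ Finset.Icc 1 m, ((k : ℝ) - α))) •
        ∫ s in Ioi (0 : ℝ), s ^ ((m : ℝ) - α) • (R s ^ (m + 1)) = negPow R α :=
  stmt6_general M A R hA m α hα
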